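/- arXiv:1610.09883 — 2 statements merged into one kernel-verified Lean document; each statement's English description precedes it below -/
import Mathlib

section
/- Let p, q > 1 and let Γ, γ > 0 satisfy γ^p = Γ(p+1)/(pq−1), Γ^q = γ(q+1)/(pq−1). Then A := (1/2)γ^{p+1} + (1/2)Γ^{q+1} + (1/4)Γγ − (pq−1)Γ^q γ^p < 0. -/
/-- The quantity A = (1/2)γ^{p+1} + (1/2)Γ^{q+1} + (1/4)Γγ − (pq−1)Γ^q γ^p is negative. -/
theorem stmt_3 (p q Γ γ : ℝ) (hp : 1 < p) (hq : 1 < q)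
    (hΓ : 0 < Γ) (hγ : 0 < γ)
    (h1 : γ ^ p = Γ * ((p + 1) / (p * q - 1)))
    (h2 : Γ ^ q = γ * ((q + 1) / (p * q - 1))) :
    (1 / 2) * γ ^ (p + 1) + (1 / 2) * Γ ^ (q + 1) + (1 / 4) * (Γ * γ)
      - (p * q - 1) * (Γ ^ q * γ ^ p) < 0 := by
  have hD : 0 < p * q - 1 := by nlinarith
  have e1 : γ ^ (p + 1) = γ ^ p * γ := by
    rw [Real.rpow_add hγ, Real.rpow_one]
  have e2 : Γ ^ (q + 1) = Γ ^ q * Γ := by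
    rw [Real.rpow_add hΓ, Real.rpow_one]
  have hD' : (p * q - 1) ≠ 0 := ne_of_gt hD
  have key : (1 / 2) * γ ^ (p + 1) + (1 / 2) * Γ ^ (q + 1) + (1 / 4) * (Γ * γ)
      - (p * q - 1) * (Γ ^ q * γ ^ p)
      = Γ * γ * (-(3 * p * q + 2 * p + 2 * q + 1)) / (4 * (p * q - 1)) := by
    rw [e1, e2, h1, h2]
    field_simp
    ring
  rw [key]
  apply div_neg_of_neg_of_pos
  · nlinarith [mul_pos hΓ hγ]
  · positivity
end

section
/- Let p, q > 1, μ > 0, b = (pq−1)(2pq+p+q)/(4pq(p+1)(q+1)(1+μ)), and Γ, γ > 0 with γ^p = Γ(p+1)/(pq−1), Γ^q = γ(q+1)/(pq−1). Then bq(p+1)·(−1 + 6bp(q+1)/(pq−1) − 2bp(q+1)(p−1)(q+μ)/(pq−1)²) + bp(q+1)·(−1 + 6bμq(p+1)/(pq−1) − 2bq(p+1)(q−1)(pμ+1)/(pq−1)²) = 0. -/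
/-- Vanishing of the projection of the error term (R₁, R₂) on the null mode. -/
theorem stmt_15 (p q μ Γ γ b : ℝ) (hp : 1 < p) (hq : 1 < q) (hμ : 0 < μ)
    (hΓ : 0 < Γ) (hγ : 0 < γ)
    (h1 : γ ^ p = Γ * ((p + 1) / (p * q - 1)))
    (h2 : Γ ^ q = γ * ((q + 1) / (p * q - 1)))
    (hb : b = (p * q - 1) * (2 * p * q + p + q) / (4 * p * q * (p + 1) * (q + 1) * (1 + μ))) :
    b * q * (p + 1) *
        (-1 + 6 * b * p * (q + 1) / (p * q - 1)
          - 2 * b * p * (q + 1) * (p - 1) * (q + μ) / (p * q - 1) ^ 2)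
      + b * p * (q + 1) *
        (-1 + 6 * b * μ * q * (p + 1) / (p * q - 1)
          - 2 * b * q * (p + 1) * (q - 1) * (p * μ + 1) / (p * q - 1) ^ 2) = 0 := by
  have hpq : p * q - 1 ≠ 0 := by nlinarith
  have hp0 : p ≠ 0 := by linarith
  have hq0 : q ≠ 0 := by linarith
  have hp1 : p + 1 ≠ 0 := by linarith
  have hq1 : q + 1 ≠ 0 := by linarith
  have hμ1 : 1 + μ ≠ 0 := by linarith
  subst hb
  field_simp
  ring
end
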